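/- arXiv:1111.4256 — 4 statements merged into one kernel-verified Lean document; each statement's English description precedes it below -/
import Mathlib

section
/- Let p, e, s : (0,∞)² → ℝ with e and s twice continuously differentiable, satisfying Gibbs' equation on (0,∞)². Fix Θ > 0 and define H_Θ(ϱ,ϑ) = ϱ·e(ϱ,ϑ) − Θ·ϱ·s(ϱ,ϑ). Then the mixed second derivative of H_Θ vanishes on the slice ϑ = Θ: for every ϱ > 0, ∂_ϑ (∂_ϱ H_Θ)(ϱ,Θ) = 0. -/
/-!
On the slice `ϑ = Θ` the temperature part of Gibbs' equation gives
`∂_ϑ H_Θ(ϱ,ϑ) = ϱ·(∂_ϑ e − Θ·∂_ϑ s)(ϱ,ϑ) = ϱ·(ϑ − Θ)·∂_ϑ s(ϱ,ϑ) = 0` for every `ϱ > 0`, so its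
`ϱ`-derivative vanishes too; by the symmetry of second derivatives of the `C²` function `H_Θ`,
this is the mixed derivative `∂_ϑ ∂_ϱ H_Θ(ϱ,Θ)`.
-/

open Filter Topology

section MixedPartials

variable {E : Type*} [NormedAddCommGroup E] [NormedSpace ℝ E]

theorem hasDerivAt_comp_prodMk_fst {G : ℝ × ℝ → E} {a b : ℝ}
    (hG : DifferentiableAt ℝ G (a, b)) :
    HasDerivAt (fun x => G (x, b)) (fderiv ℝ G (a, b) (1, 0)) a :=
  hG.hasFDerivAt.comp_hasDerivAt a ((hasDerivAt_id a).prodMk (hasDerivAt_const a b))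

theorem hasDerivAt_comp_prodMk_snd {G : ℝ × ℝ → E} {a b : ℝ}
    (hG : DifferentiableAt ℝ G (a, b)) :
    HasDerivAt (fun t => G (a, t)) (fderiv ℝ G (a, b) (0, 1)) b :=
  hG.hasFDerivAt.comp_hasDerivAt b ((hasDerivAt_const b a).prodMk (hasDerivAt_id b))

theorem deriv_deriv_comm_of_contDiffAt {f : ℝ → ℝ → E} {a b : ℝ}
    (hf : ContDiffAt ℝ 2 (fun q : ℝ × ℝ => f q.1 q.2) (a, b)) :
    deriv (fun t => deriv (fun x => f x t) a) b = deriv (fun x => deriv (fun t => f x t) b) a := by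
  set F : ℝ × ℝ → E := fun q => f q.1 q.2
  have hF : ∀ᶠ q in 𝓝 (a, b), DifferentiableAt ℝ F q :=
    (hf.eventually (by simp)).mono fun q hq => hq.differentiableAt (by norm_num)
  have hF' : DifferentiableAt ℝ (fderiv ℝ F) (a, b) :=
    (hf.fderiv_right (m := 1) le_rfl).differentiableAt one_ne_zero
  have h_fst : (fun t => deriv (fun x => f x t) a) =ᶠ[𝓝 b] fun t => fderiv ℝ F (a, t) (1, 0) :=
    ((Continuous.prodMk_right a).tendsto b |>.eventually hF).mono fun t ht =>
      (hasDerivAt_comp_prodMk_fst ht).deriv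
  have h_snd : (fun x => deriv (fun t => f x t) b) =ᶠ[𝓝 a] fun x => fderiv ℝ F (x, b) (0, 1) :=
    ((Continuous.prodMk_left b).tendsto a |>.eventually hF).mono fun x hx =>
      (hasDerivAt_comp_prodMk_snd hx).deriv
  rw [h_fst.deriv_eq, h_snd.deriv_eq,
    ((hasDerivAt_comp_prodMk_snd hF').clm_apply (hasDerivAt_const b _)).deriv,
    ((hasDerivAt_comp_prodMk_fst hF').clm_apply (hasDerivAt_const a _)).deriv]
  simpa using hf.isSymmSndFDerivAt (by simp) (0, 1) (1, 0)

end MixedPartials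

def ballisticFreeEnergy (e s : ℝ → ℝ → ℝ) (Θ ϱ ϑ : ℝ) : ℝ :=
  ϱ * e ϱ ϑ - Θ * (ϱ * s ϱ ϑ)

section BallisticFreeEnergy

variable {e s : ℝ → ℝ → ℝ} {Θ : ℝ}

theorem contDiffOn_ballisticFreeEnergy {n : WithTop ℕ∞} {U : Set (ℝ × ℝ)}
    (he : ContDiffOn ℝ n (fun q : ℝ × ℝ => e q.1 q.2) U)
    (hs : ContDiffOn ℝ n (fun q : ℝ × ℝ => s q.1 q.2) U) :
    ContDiffOn ℝ n (fun q : ℝ × ℝ => ballisticFreeEnergy e s Θ q.1 q.2) U :=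
  (contDiffOn_fst.mul he).sub (contDiffOn_const.mul (contDiffOn_fst.mul hs))

theorem hasDerivAt_ballisticFreeEnergy_temp {ϱ ϑ : ℝ}
    (he : DifferentiableAt ℝ (fun t => e ϱ t) ϑ) (hs : DifferentiableAt ℝ (fun t => s ϱ t) ϑ) :
    HasDerivAt (fun t => ballisticFreeEnergy e s Θ ϱ t)
      (ϱ * (deriv (fun t => e ϱ t) ϑ - Θ * deriv (fun t => s ϱ t) ϑ)) ϑ :=
  ((he.hasDerivAt.const_mul ϱ).sub ((hs.hasDerivAt.const_mul ϱ).const_mul Θ)).congr_deriv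
    (by ring)

theorem deriv_ballisticFreeEnergy_temp_eq_zero {ϱ : ℝ}
    (he : DifferentiableAt ℝ (fun t => e ϱ t) Θ) (hs : DifferentiableAt ℝ (fun t => s ϱ t) Θ)
    (gibbs_temp : Θ * deriv (fun t => s ϱ t) Θ = deriv (fun t => e ϱ t) Θ) :
    deriv (fun t => ballisticFreeEnergy e s Θ ϱ t) Θ = 0 := by
  rw [(hasDerivAt_ballisticFreeEnergy_temp he hs).deriv, ← gibbs_temp, sub_self, mul_zero]

end BallisticFreeEnergy

theorem ballistic_free_energy_mixed_derivative_vanishes_general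
    (e s : ℝ → ℝ → ℝ)
    (he : ContDiffOn ℝ 2 (fun q : ℝ × ℝ => e q.1 q.2)
      (Set.Ioi (0 : ℝ) ×ˢ Set.Ioi (0 : ℝ)))
    (hs : ContDiffOn ℝ 2 (fun q : ℝ × ℝ => s q.1 q.2)
      (Set.Ioi (0 : ℝ) ×ˢ Set.Ioi (0 : ℝ)))
    (gibbs_temp : ∀ ϱ ϑ : ℝ, 0 < ϱ → 0 < ϑ →
      ϑ * deriv (fun t => s ϱ t) ϑ = deriv (fun t => e ϱ t) ϑ)
    (Θ : ℝ) (hΘ : 0 < Θ) :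
    ∀ ϱ : ℝ, 0 < ϱ →
      deriv (fun t => deriv (fun x => x * e x t - Θ * (x * s x t)) ϱ) Θ = 0 := by
  intro ϱ hϱ
  have mem_nhds {x t : ℝ} (hx : 0 < x) (ht : 0 < t) :
      Set.Ioi (0 : ℝ) ×ˢ Set.Ioi (0 : ℝ) ∈ 𝓝 (x, t) :=
    prod_mem_nhds (Ioi_mem_nhds hx) (Ioi_mem_nhds ht)
  have differentiableAt_temp {f : ℝ → ℝ → ℝ} (hf : ContDiffOn ℝ 2 (fun q : ℝ × ℝ => f q.1 q.2)
      (Set.Ioi (0 : ℝ) ×ˢ Set.Ioi (0 : ℝ))) {x : ℝ} (hx : 0 < x) :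
      DifferentiableAt ℝ (fun t => f x t) Θ :=
    (hasDerivAt_comp_prodMk_snd ((hf.contDiffAt (mem_nhds hx hΘ)).differentiableAt
      two_ne_zero)).differentiableAt
  have hH := (contDiffOn_ballisticFreeEnergy (Θ := Θ) he hs).contDiffAt (mem_nhds hϱ hΘ)
  change deriv (fun t => deriv (fun x => ballisticFreeEnergy e s Θ x t) ϱ) Θ = 0
  rw [deriv_deriv_comm_of_contDiffAt hH]
  have slice : (fun x => deriv (fun t => ballisticFreeEnergy e s Θ x t) Θ) =ᶠ[𝓝 ϱ] fun _ => 0 :=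
    (eventually_gt_nhds hϱ).mono fun x hx => deriv_ballisticFreeEnergy_temp_eq_zero
      (differentiableAt_temp he hx) (differentiableAt_temp hs hx) (gibbs_temp x Θ hx hΘ)
  rw [slice.deriv_eq, deriv_const]

/-- Under Gibbs' equation (with `e, s` twice continuously
differentiable), the mixed second derivative of the ballistic free energy
`H_Θ(ϱ,ϑ) = ϱ·e(ϱ,ϑ) − Θ·ϱ·s(ϱ,ϑ)` vanishes on the slice `ϑ = Θ`:
`∂_ϑ (∂_ϱ H_Θ)(ϱ,Θ) = 0` for every `ϱ > 0`. -/
theorem ballistic_free_energy_mixed_derivative_vanishes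
    (p e s : ℝ → ℝ → ℝ)
    (he : ContDiffOn ℝ 2 (fun q : ℝ × ℝ => e q.1 q.2)
      (Set.Ioi (0 : ℝ) ×ˢ Set.Ioi (0 : ℝ)))
    (hs : ContDiffOn ℝ 2 (fun q : ℝ × ℝ => s q.1 q.2)
      (Set.Ioi (0 : ℝ) ×ˢ Set.Ioi (0 : ℝ)))
    (gibbs_temp : ∀ ϱ ϑ : ℝ, 0 < ϱ → 0 < ϑ →
      ϑ * deriv (fun t => s ϱ t) ϑ = deriv (fun t => e ϱ t) ϑ)
    (gibbs_dens : ∀ ϱ ϑ : ℝ, 0 < ϱ → 0 < ϑ →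
      ϑ * deriv (fun r => s r ϑ) ϱ
        = deriv (fun r => e r ϑ) ϱ - p ϱ ϑ / ϱ ^ 2)
    (Θ : ℝ) (hΘ : 0 < Θ) :
    ∀ ϱ : ℝ, 0 < ϱ →
      deriv (fun t => deriv (fun x => x * e x t - Θ * (x * s x t)) ϱ) Θ = 0 :=
  ballistic_free_energy_mixed_derivative_vanishes_general e s he hs gibbs_temp Θ hΘ
end

section
/- Let p, e, s : (0,∞)² → ℝ with e and s twice continuously differentiable and p continuously differentiable, satisfying Gibbs' equation on (0,∞)². Fix Θ > 0, define H_Θ(ϱ,ϑ) = ϱ·e(ϱ,ϑ) − Θ·ϱ·s(ϱ,ϑ), and assume ∂_ϱ p(ϱ,Θ) > 0 for all ϱ > 0. Then the function ϱ ↦ H_Θ(ϱ,Θ) is strictly convex on (0,∞). -/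
/-!
Write `ψ(ϱ) = e(ϱ,Θ) − Θ·s(ϱ,Θ)` for the specific free energy at temperature `Θ`, so that
`H_Θ(ϱ,Θ) = ϱ·ψ(ϱ)`. The density part of Gibbs' equation at `ϑ = Θ` says `ψ' = p/ϱ²`; hence
`(ϱψ)' = ψ + p/ϱ` and `(ϱψ)'' = p/ϱ² + ∂_ϱp/ϱ − p/ϱ² = ∂_ϱp/ϱ > 0`.
-/

open Set

theorem DifferentiableOn.differentiableAt_slice_left {𝕜 E F G : Type*} [NontriviallyNormedField 𝕜]
    [NormedAddCommGroup E] [NormedSpace 𝕜 E] [NormedAddCommGroup F] [NormedSpace 𝕜 F]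
    [NormedAddCommGroup G] [NormedSpace 𝕜 G] {f : E × F → G} {U : Set (E × F)}
    (hf : DifferentiableOn 𝕜 f U) (hU : IsOpen U) {x : E} {y : F} (hxy : (x, y) ∈ U) :
    DifferentiableAt 𝕜 (fun r => f (r, y)) x :=
  (hf.differentiableAt (hU.mem_nhds hxy)).comp x
    (differentiableAt_id.prodMk (differentiableAt_const y))

section FreeEnergy

variable {ψ P : ℝ → ℝ} {x : ℝ}

theorem hasDerivAt_mul_self_of_hasDerivAt_div_sq (hψ : HasDerivAt ψ (P x / x ^ 2) x) (hx : x ≠ 0) :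
    HasDerivAt (fun x => x * ψ x) (ψ x + P x / x) x := by
  refine ((hasDerivAt_id' x).mul hψ).congr_deriv ?_
  field_simp

theorem hasDerivAt_add_div_self_of_hasDerivAt_div_sq {P' : ℝ} (hψ : HasDerivAt ψ (P x / x ^ 2) x)
    (hP : HasDerivAt P P' x) (hx : x ≠ 0) :
    HasDerivAt (fun x => ψ x + P x / x) (P' / x) x := by
  refine (hψ.add (hP.div (hasDerivAt_id' x) hx)).congr_deriv ?_
  field_simp
  ring

theorem strictConvexOn_Ioi_mul_self_of_hasDerivAt_div_sq
    (hψ : ∀ x > 0, HasDerivAt ψ (P x / x ^ 2) x) (hP : ∀ x > 0, 0 < deriv P x) :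
    StrictConvexOn ℝ (Ioi 0) (fun x => x * ψ x) := by
  have hF' : ∀ x ∈ Ioi (0 : ℝ), HasDerivAt (fun x => x * ψ x) (ψ x + P x / x) x :=
    fun x hx => hasDerivAt_mul_self_of_hasDerivAt_div_sq (hψ x hx) (ne_of_gt hx)
  -- `deriv P x ≠ 0` forces `P` to be differentiable at `x`.
  have hF'' : ∀ x ∈ Ioi (0 : ℝ), HasDerivAt (fun x => ψ x + P x / x) (deriv P x / x) x :=
    fun x hx => hasDerivAt_add_div_self_of_hasDerivAt_div_sq (hψ x hx)
      (differentiableAt_of_deriv_ne_zero (hP x hx).ne').hasDerivAt (ne_of_gt hx)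
  have hmono : StrictMonoOn (fun x => ψ x + P x / x) (Ioi 0) :=
    strictMonoOn_of_deriv_pos (convex_Ioi 0)
      (fun x hx => (hF'' x hx).continuousAt.continuousWithinAt)
      (fun x hx => by
        rw [interior_Ioi] at hx
        rw [(hF'' x hx).deriv]
        exact div_pos (hP x hx) hx)
  refine StrictMonoOn.strictConvexOn_of_deriv (convex_Ioi 0)
    (fun x hx => (hF' x hx).continuousAt.continuousWithinAt) ?_
  rw [interior_Ioi]
  exact hmono.congr (fun x hx => ((hF' x hx).deriv).symm)

end FreeEnergy

theorem ballistic_free_energy_strictConvexOn_general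
    (p e s : ℝ → ℝ → ℝ)
    (he : ContDiffOn ℝ 2 (fun q : ℝ × ℝ => e q.1 q.2)
      (Set.Ioi (0 : ℝ) ×ˢ Set.Ioi (0 : ℝ)))
    (hs : ContDiffOn ℝ 2 (fun q : ℝ × ℝ => s q.1 q.2)
      (Set.Ioi (0 : ℝ) ×ˢ Set.Ioi (0 : ℝ)))
    (gibbs_dens : ∀ ϱ ϑ : ℝ, 0 < ϱ → 0 < ϑ →
      ϑ * deriv (fun r => s r ϑ) ϱ
        = deriv (fun r => e r ϑ) ϱ - p ϱ ϑ / ϱ ^ 2)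
    (Θ : ℝ) (hΘ : 0 < Θ)
    (hstab : ∀ ϱ : ℝ, 0 < ϱ → 0 < deriv (fun r => p r Θ) ϱ) :
    StrictConvexOn ℝ (Set.Ioi (0 : ℝ))
      (fun ϱ : ℝ => ϱ * e ϱ Θ - Θ * (ϱ * s ϱ Θ)) := by
  have hquadrant : IsOpen (Ioi (0 : ℝ) ×ˢ Ioi (0 : ℝ)) := isOpen_Ioi.prod isOpen_Ioi
  have hψ : ∀ x > 0, HasDerivAt (fun r => e r Θ - Θ * s r Θ) (p x Θ / x ^ 2) x := by
    intro x hx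
    have he' : DifferentiableAt ℝ (fun r => e r Θ) x :=
      (he.differentiableOn two_ne_zero).differentiableAt_slice_left hquadrant ⟨hx, hΘ⟩
    have hs' : DifferentiableAt ℝ (fun r => s r Θ) x :=
      (hs.differentiableOn two_ne_zero).differentiableAt_slice_left hquadrant ⟨hx, hΘ⟩
    refine (he'.hasDerivAt.sub (hs'.hasDerivAt.const_mul Θ)).congr_deriv ?_
    linarith [gibbs_dens x Θ hx hΘ]
  convert strictConvexOn_Ioi_mul_self_of_hasDerivAt_div_sq hψ hstab using 1
  funext ϱ
  ring

/-- Under Gibbs' equation (with `e, s` twice continuously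
differentiable and `p` continuously differentiable) and the first thermodynamic
stability condition `∂_ϱ p(ϱ,Θ) > 0`, the map `ϱ ↦ H_Θ(ϱ,Θ)` is strictly convex
on `(0,∞)`, where `H_Θ(ϱ,ϑ) = ϱ·e(ϱ,ϑ) − Θ·ϱ·s(ϱ,ϑ)`. -/
theorem ballistic_free_energy_strictConvexOn
    (p e s : ℝ → ℝ → ℝ)
    (hp : ContDiffOn ℝ 1 (fun q : ℝ × ℝ => p q.1 q.2)
      (Set.Ioi (0 : ℝ) ×ˢ Set.Ioi (0 : ℝ)))
    (he : ContDiffOn ℝ 2 (fun q : ℝ × ℝ => e q.1 q.2)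
      (Set.Ioi (0 : ℝ) ×ˢ Set.Ioi (0 : ℝ)))
    (hs : ContDiffOn ℝ 2 (fun q : ℝ × ℝ => s q.1 q.2)
      (Set.Ioi (0 : ℝ) ×ˢ Set.Ioi (0 : ℝ)))
    (gibbs_temp : ∀ ϱ ϑ : ℝ, 0 < ϱ → 0 < ϑ →
      ϑ * deriv (fun t => s ϱ t) ϑ = deriv (fun t => e ϱ t) ϑ)
    (gibbs_dens : ∀ ϱ ϑ : ℝ, 0 < ϱ → 0 < ϑ →
      ϑ * deriv (fun r => s r ϑ) ϱ
        = deriv (fun r => e r ϑ) ϱ - p ϱ ϑ / ϱ ^ 2)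
    (Θ : ℝ) (hΘ : 0 < Θ)
    (hstab : ∀ ϱ : ℝ, 0 < ϱ → 0 < deriv (fun r => p r Θ) ϱ) :
    StrictConvexOn ℝ (Set.Ioi (0 : ℝ))
      (fun ϱ : ℝ => ϱ * e ϱ Θ - Θ * (ϱ * s ϱ Θ)) :=
  ballistic_free_energy_strictConvexOn_general p e s he hs gibbs_dens Θ hΘ hstab
end

section
/- Let e, s : (0,∞)² → ℝ be continuously differentiable in the temperature variable, satisfy ϑ·∂_ϑ s(ϱ,ϑ) = ∂_ϑ e(ϱ,ϑ) for all ϱ, ϑ > 0, and suppose ∂_ϑ e(ϱ,ϑ) > 0 for all ϱ, ϑ > 0. Fix Θ > 0 and define H_Θ(ϱ,ϑ) = ϱ·e(ϱ,ϑ) − Θ·ϱ·s(ϱ,ϑ). Then for every ϱ > 0 the function ϑ ↦ H_Θ(ϱ,ϑ) attains its strict global minimum over (0,∞) at ϑ = Θ; that is, H_Θ(ϱ,ϑ) > H_Θ(ϱ,Θ) whenever ϑ > 0 and ϑ ≠ Θ. -/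
/-!
By Gibbs' equation `∂_ϑ (e - Θ s) = ∂_ϑ e - Θ ∂_ϑ s = (ϑ - Θ) ∂_ϑ s`, and `∂_ϑ s = ∂_ϑ e / ϑ > 0`
by stability. So `ϑ ↦ e - Θ s` strictly decreases on `(0, Θ]` and strictly increases on `[Θ, ∞)`;
multiplying by `ϱ > 0` gives the claim for `H_Θ`.
-/

theorem Convex.lt_of_deriv_neg_left_of_deriv_pos_right {D : Set ℝ} (hD : Convex ℝ D)
    {f : ℝ → ℝ} (hf : ContinuousOn f D) {a : ℝ} (ha : a ∈ D)
    (hneg : ∀ x ∈ interior D, x < a → deriv f x < 0)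
    (hpos : ∀ x ∈ interior D, a < x → 0 < deriv f x)
    {x : ℝ} (hx : x ∈ D) (hxa : x ≠ a) : f a < f x := by
  rcases hxa.lt_or_gt with hlt | hgt
  · have hsub : Set.Icc x a ⊆ D := hD.ordConnected.out hx ha
    have hanti : StrictAntiOn f (Set.Icc x a) := by
      refine strictAntiOn_of_deriv_neg (convex_Icc x a) (hf.mono hsub) fun y hy => ?_
      rw [interior_Icc] at hy
      exact hneg y (interior_mono hsub (by rwa [interior_Icc])) hy.2
    exact hanti (Set.left_mem_Icc.mpr hlt.le) (Set.right_mem_Icc.mpr hlt.le) hlt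
  · have hsub : Set.Icc a x ⊆ D := hD.ordConnected.out ha hx
    have hmono : StrictMonoOn f (Set.Icc a x) := by
      refine strictMonoOn_of_deriv_pos (convex_Icc a x) (hf.mono hsub) fun y hy => ?_
      rw [interior_Icc] at hy
      exact hpos y (interior_mono hsub (by rwa [interior_Icc])) hy.1
    exact hmono (Set.left_mem_Icc.mpr hgt.le) (Set.right_mem_Icc.mpr hgt.le) hgt

section Gibbs

variable {E S : ℝ → ℝ} {t : ℝ}

theorem deriv_entropy_pos_of_gibbs (ht : 0 < t) (hgibbs : t * deriv S t = deriv E t)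
    (hstab : 0 < deriv E t) : 0 < deriv S t :=
  pos_of_mul_pos_right (hgibbs ▸ hstab) ht.le

/-- `deriv` is `0` off the differentiability locus, so positivity of `deriv E t` and `deriv S t`
already forces differentiability. -/
theorem hasDerivAt_sub_const_mul_of_gibbs (ht : 0 < t)
    (hgibbs : t * deriv S t = deriv E t) (hstab : 0 < deriv E t) (Θ : ℝ) :
    HasDerivAt (fun u => E u - Θ * S u) ((t - Θ) * deriv S t) t := by
  have hE : DifferentiableAt ℝ E t := differentiableAt_of_deriv_ne_zero hstab.ne'
  have hS : DifferentiableAt ℝ S t :=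
    differentiableAt_of_deriv_ne_zero (deriv_entropy_pos_of_gibbs ht hgibbs hstab).ne'
  exact (hE.hasDerivAt.sub (hS.hasDerivAt.const_mul Θ)).congr_deriv (by rw [← hgibbs]; ring)

theorem sub_const_mul_lt_of_gibbs (hgibbs : ∀ t, 0 < t → t * deriv S t = deriv E t)
    (hstab : ∀ t, 0 < t → 0 < deriv E t) {Θ : ℝ} (hΘ : 0 < Θ) (ht : 0 < t) (hne : t ≠ Θ) :
    E Θ - Θ * S Θ < E t - Θ * S t := by
  have hderiv (u : ℝ) (hu : 0 < u) :
      HasDerivAt (fun u => E u - Θ * S u) ((u - Θ) * deriv S u) u :=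
    hasDerivAt_sub_const_mul_of_gibbs hu (hgibbs u hu) (hstab u hu) Θ
  have hS (u : ℝ) (hu : 0 < u) : 0 < deriv S u :=
    deriv_entropy_pos_of_gibbs hu (hgibbs u hu) (hstab u hu)
  refine (convex_Ioi 0).lt_of_deriv_neg_left_of_deriv_pos_right
    (fun u hu => (hderiv u hu).continuousAt.continuousWithinAt) hΘ ?_ ?_ ht hne
  · rw [interior_Ioi]
    intro u hu hlt
    rw [(hderiv u hu).deriv]
    exact mul_neg_of_neg_of_pos (sub_neg.mpr hlt) (hS u hu)
  · rw [interior_Ioi]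
    intro u hu hgt
    rw [(hderiv u hu).deriv]
    exact mul_pos (sub_pos.mpr hgt) (hS u hu)

end Gibbs

theorem ballistic_free_energy_strict_minimum_general
    (e s : ℝ → ℝ → ℝ)
    (gibbs_temp : ∀ ϱ ϑ : ℝ, 0 < ϱ → 0 < ϑ →
      ϑ * deriv (fun t => s ϱ t) ϑ = deriv (fun t => e ϱ t) ϑ)
    (hstab : ∀ ϱ ϑ : ℝ, 0 < ϱ → 0 < ϑ → 0 < deriv (fun t => e ϱ t) ϑ)
    (Θ : ℝ) (hΘ : 0 < Θ) :
    ∀ ϱ ϑ : ℝ, 0 < ϱ → 0 < ϑ → ϑ ≠ Θ →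
      ϱ * e ϱ Θ - Θ * (ϱ * s ϱ Θ) < ϱ * e ϱ ϑ - Θ * (ϱ * s ϱ ϑ) := by
  intro ϱ ϑ hϱ hϑ hne
  have hmin := sub_const_mul_lt_of_gibbs (gibbs_temp ϱ · hϱ) (hstab ϱ · hϱ) hΘ hϑ hne
  have := mul_lt_mul_of_pos_left hmin hϱ
  linarith

/-- If `e, s` are continuously differentiable in the temperature
variable, satisfy the temperature part of Gibbs' equation `ϑ·∂_ϑ s = ∂_ϑ e`, and
`∂_ϑ e > 0` (thermodynamic stability), then for each fixed `Θ > 0` and `ϱ > 0` the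
map `ϑ ↦ H_Θ(ϱ,ϑ) = ϱ·e(ϱ,ϑ) − Θ·ϱ·s(ϱ,ϑ)` attains its strict global minimum over
`(0,∞)` at `ϑ = Θ`. -/
theorem ballistic_free_energy_strict_minimum
    (e s : ℝ → ℝ → ℝ)
    (he : ∀ ϱ : ℝ, 0 < ϱ → ContDiffOn ℝ 1 (fun t => e ϱ t) (Set.Ioi (0 : ℝ)))
    (hs : ∀ ϱ : ℝ, 0 < ϱ → ContDiffOn ℝ 1 (fun t => s ϱ t) (Set.Ioi (0 : ℝ)))
    (gibbs_temp : ∀ ϱ ϑ : ℝ, 0 < ϱ → 0 < ϑ →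
      ϑ * deriv (fun t => s ϱ t) ϑ = deriv (fun t => e ϱ t) ϑ)
    (hstab : ∀ ϱ ϑ : ℝ, 0 < ϱ → 0 < ϑ → 0 < deriv (fun t => e ϱ t) ϑ)
    (Θ : ℝ) (hΘ : 0 < Θ) :
    ∀ ϱ ϑ : ℝ, 0 < ϱ → 0 < ϑ → ϑ ≠ Θ →
      ϱ * e ϱ Θ - Θ * (ϱ * s ϱ Θ) < ϱ * e ϱ ϑ - Θ * (ϱ * s ϱ ϑ) :=
  ballistic_free_energy_strict_minimum_general e s gibbs_temp hstab Θ hΘ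
end

section
/- Let a > 0 and let P : (0,∞) → ℝ be differentiable with (5/3)·P(Z) − P'(Z)·Z > 0 for all Z > 0 and P(Z)/Z^{5/3} → P_∞ > 0 as Z → ∞. Define e(ϱ,ϑ) = (3/2)·(ϑ^{5/2}/ϱ)·P(ϱ·ϑ^{−3/2}) + a·ϑ⁴/ϱ. Then for all ϱ, ϑ > 0, ϱ·e(ϱ,ϑ) ≥ min{(3/2)·P_∞, a}·(ϱ^{5/3} + ϑ⁴). -/
/-!
The condition `(5/3)·P(Z) − P'(Z)·Z > 0` says that `P(Z)/Z^(5/3)` decreases, so it stays above its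
limit: `P(Z) ≥ P_∞·Z^(5/3)`. At `Z = ϱ·ϑ^(−3/2)` the factor `ϑ^(5/2)` turns `Z^(5/3)` into
`ϱ^(5/3)`, whence `ϱ·e ≥ (3/2)·P_∞·ϱ^(5/3) + a·ϑ⁴`.
-/

open Filter Set Topology

theorem AntitoneOn.le_of_tendsto_atTop {f : ℝ → ℝ} {a L x : ℝ}
    (hf : AntitoneOn f (Ioi a)) (hL : Tendsto f atTop (𝓝 L)) (hx : a < x) : L ≤ f x := by
  refine le_of_tendsto hL ?_
  filter_upwards [eventually_ge_atTop x] with y hy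
  exact hf hx (hx.trans_le hy) hy

theorem antitoneOn_div_rpow {P P' : ℝ → ℝ} {p : ℝ}
    (hP : ∀ Z, 0 < Z → HasDerivAt P (P' Z) Z)
    (hP' : ∀ Z, 0 < Z → P' Z * Z ≤ p * P Z) :
    AntitoneOn (fun Z ↦ P Z / Z ^ p) (Ioi 0) := by
  have hderiv : ∀ Z ∈ Ioi (0 : ℝ), HasDerivAt (fun Z ↦ P Z / Z ^ p)
      (Z ^ (p - 1) * (P' Z * Z - p * P Z) / (Z ^ p) ^ 2) Z := by
    intro Z (hZ : 0 < Z)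
    refine ((hP Z hZ).div (Real.hasDerivAt_rpow_const (Or.inl hZ.ne'))
      (Real.rpow_pos_of_pos hZ _).ne').congr_deriv ?_
    rw [Real.rpow_sub_one hZ.ne']
    field_simp
  refine antitoneOn_of_hasDerivWithinAt_nonpos (convex_Ioi 0)
    (fun Z hZ ↦ (hderiv Z hZ).continuousAt.continuousWithinAt)
    (fun Z hZ ↦ (hderiv Z (interior_subset hZ)).hasDerivWithinAt) fun Z hZ ↦ ?_
  replace hZ : 0 < Z := interior_subset hZ
  exact div_nonpos_of_nonpos_of_nonneg (mul_nonpos_of_nonneg_of_nonpos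
    (Real.rpow_pos_of_pos hZ _).le (sub_nonpos.2 (hP' Z hZ))) (sq_nonneg _)

theorem mul_rpow_le_of_tendsto_div_rpow {P P' : ℝ → ℝ} {p L : ℝ}
    (hP : ∀ Z, 0 < Z → HasDerivAt P (P' Z) Z)
    (hP' : ∀ Z, 0 < Z → P' Z * Z ≤ p * P Z)
    (hL : Tendsto (fun Z ↦ P Z / Z ^ p) atTop (𝓝 L)) {Z : ℝ} (hZ : 0 < Z) :
    L * Z ^ p ≤ P Z :=
  (le_div_iff₀ (Real.rpow_pos_of_pos hZ p)).1 <|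
    (antitoneOn_div_rpow hP hP').le_of_tendsto_atTop hL hZ

theorem rpow_mul_mul_mul_rpow_neg_rpow {ϱ ϑ : ℝ} (hϱ : 0 ≤ ϱ) (hϑ : 0 < ϑ) (q s : ℝ) :
    ϑ ^ (q * s) * (ϱ * ϑ ^ (-q)) ^ s = ϱ ^ s := by
  rw [Real.mul_rpow hϱ (Real.rpow_nonneg hϑ.le _), ← Real.rpow_mul hϑ.le, mul_left_comm,
    ← Real.rpow_add hϑ, neg_mul, add_neg_cancel, Real.rpow_zero, mul_one]

theorem min_mul_add_le_mul_add_mul {b c x y : ℝ} (hx : 0 ≤ x) (hy : 0 ≤ y) :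
    min b c * (x + y) ≤ b * x + c * y := by
  rw [mul_add]
  exact add_le_add (mul_le_mul_of_nonneg_right (min_le_left b c) hx)
    (mul_le_mul_of_nonneg_right (min_le_right b c) hy)

theorem internal_energy_coercivity_general
    (a : ℝ)
    (P P' : ℝ → ℝ)
    (hP : ∀ Z : ℝ, 0 < Z → HasDerivAt P (P' Z) Z)
    (hm4 : ∀ Z : ℝ, 0 < Z → 0 < (5 / 3) * P Z - P' Z * Z)
    (Pinf : ℝ)
    (hlim : Filter.Tendsto (fun Z : ℝ => P Z / Z ^ ((5 : ℝ) / 3))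
      Filter.atTop (nhds Pinf))
    (e : ℝ → ℝ → ℝ)
    (he : ∀ ϱ ϑ : ℝ, 0 < ϱ → 0 < ϑ →
      e ϱ ϑ = (3 / 2) * (ϑ ^ ((5 : ℝ) / 2) / ϱ) * P (ϱ * ϑ ^ (-(3 : ℝ) / 2))
        + a * ϑ ^ 4 / ϱ) :
    ∀ ϱ ϑ : ℝ, 0 < ϱ → 0 < ϑ →
      min ((3 / 2) * Pinf) a * (ϱ ^ ((5 : ℝ) / 3) + ϑ ^ 4) ≤ ϱ * e ϱ ϑ := by
  intro ϱ ϑ hϱ hϑ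
  set Z := ϱ * ϑ ^ (-(3 : ℝ) / 2) with hZ_def
  have hZ : 0 < Z := by positivity
  have hPZ : Pinf * Z ^ ((5 : ℝ) / 3) ≤ P Z :=
    mul_rpow_le_of_tendsto_div_rpow hP (fun Z hZ ↦ (sub_pos.1 (hm4 Z hZ)).le) hlim hZ
  have hscale : ϑ ^ ((5 : ℝ) / 2) * Z ^ ((5 : ℝ) / 3) = ϱ ^ ((5 : ℝ) / 3) := by
    rw [hZ_def, show (5 : ℝ) / 2 = 3 / 2 * (5 / 3) by norm_num, show -(3 : ℝ) / 2 = -(3 / 2) by ring]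
    exact rpow_mul_mul_mul_rpow_neg_rpow hϱ.le hϑ _ _
  have henergy : ϱ * e ϱ ϑ = 3 / 2 * (ϑ ^ ((5 : ℝ) / 2) * P Z) + a * ϑ ^ 4 := by
    rw [he ϱ ϑ hϱ hϑ, ← hZ_def]
    field_simp
  calc min (3 / 2 * Pinf) a * (ϱ ^ ((5 : ℝ) / 3) + ϑ ^ 4)
      ≤ 3 / 2 * Pinf * ϱ ^ ((5 : ℝ) / 3) + a * ϑ ^ 4 :=
        min_mul_add_le_mul_add_mul (by positivity) (by positivity)
    _ = 3 / 2 * (ϑ ^ ((5 : ℝ) / 2) * (Pinf * Z ^ ((5 : ℝ) / 3))) + a * ϑ ^ 4 := by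
        rw [← hscale]; ring
    _ ≤ ϱ * e ϱ ϑ := by
        rw [henergy]; gcongr

/-- With `a > 0`, `P` differentiable, `(5/3)·P(Z) − P'(Z)·Z > 0`
for all `Z > 0`, and `P(Z)/Z^(5/3) → P_∞ > 0` as `Z → ∞`, the internal energy
`e(ϱ,ϑ) = (3/2)·(ϑ^(5/2)/ϱ)·P(ϱ·ϑ^(−3/2)) + a·ϑ⁴/ϱ` satisfies
`ϱ·e(ϱ,ϑ) ≥ min{(3/2)·P_∞, a}·(ϱ^(5/3) + ϑ⁴)` for all `ϱ, ϑ > 0`. -/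
theorem internal_energy_coercivity
    (a : ℝ) (ha : 0 < a)
    (P P' : ℝ → ℝ)
    (hP : ∀ Z : ℝ, 0 < Z → HasDerivAt P (P' Z) Z)
    (hm4 : ∀ Z : ℝ, 0 < Z → 0 < (5 / 3) * P Z - P' Z * Z)
    (Pinf : ℝ) (hPinf : 0 < Pinf)
    (hlim : Filter.Tendsto (fun Z : ℝ => P Z / Z ^ ((5 : ℝ) / 3))
      Filter.atTop (nhds Pinf))
    (e : ℝ → ℝ → ℝ)
    (he : ∀ ϱ ϑ : ℝ, 0 < ϱ → 0 < ϑ →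
      e ϱ ϑ = (3 / 2) * (ϑ ^ ((5 : ℝ) / 2) / ϱ) * P (ϱ * ϑ ^ (-(3 : ℝ) / 2))
        + a * ϑ ^ 4 / ϱ) :
    ∀ ϱ ϑ : ℝ, 0 < ϱ → 0 < ϑ →
      min ((3 / 2) * Pinf) a * (ϱ ^ ((5 : ℝ) / 3) + ϑ ^ 4) ≤ ϱ * e ϱ ϑ :=
  internal_energy_coercivity_general a P P' hP hm4 Pinf hlim e he
end
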